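/- The optimal third-order SSP Runge–Kutta method is strong stability preserving: let V be a real vector space, N a seminorm on V, L : V → V a map, and Δt ≥ 0, and assume the forward Euler step is stable, i.e., N(w + Δt·L(w)) ≤ N(w) for all w ∈ V. Then for every u ∈ V, the stages u⁽¹⁾ = u + Δt·L(u), u⁽²⁾ = (3/4)u + (1/4)(u⁽¹⁾ + Δt·L(u⁽¹⁾)), u⁺ = (1/3)u + (2/3)(u⁽²⁾ + Δt·L(u⁽²⁾)) satisfy N(u⁺) ≤ N(u). -/
import Mathlib


/-- The optimal third-order SSP Runge–Kutta method of Gottlieb–Shu is strong stability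
preserving: if the forward Euler step is stable with respect to a seminorm `N`,
i.e. `N(w + Δt·L(w)) ≤ N(w)` for all `w`, then the full SSP-RK3 update satisfies
`N(u⁺) ≤ N(u)`. -/
theorem sspRK3_strong_stability {V : Type*} [AddCommGroup V] [Module ℝ V]
    (N : Seminorm ℝ V) (L : V → V) (Δt : ℝ) (hΔt : 0 ≤ Δt)
    (hFE : ∀ w : V, N (w + Δt • L w) ≤ N w) :
    ∀ u : V,
      let u₁ := u + Δt • L u
      let u₂ := (3 / 4 : ℝ) • u + (1 / 4 : ℝ) • (u₁ + Δt • L u₁)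
      let u' := (1 / 3 : ℝ) • u + (2 / 3 : ℝ) • (u₂ + Δt • L u₂)
      N u' ≤ N u := by
  intro u u₁ u₂ u'
  have h1 : N u₁ ≤ N u := hFE u
  have h2 : N u₂ ≤ N u := by
    calc N u₂ ≤ N ((3 / 4 : ℝ) • u) + N ((1 / 4 : ℝ) • (u₁ + Δt • L u₁)) :=
          map_add_le_add N _ _
      _ = (3/4) * N u + (1/4) * N (u₁ + Δt • L u₁) := by
          rw [map_smul_eq_mul, map_smul_eq_mul]; norm_num
      _ ≤ (3/4) * N u + (1/4) * N u₁ := by nlinarith [hFE u₁]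
      _ ≤ N u := by nlinarith
  calc N u' ≤ N ((1 / 3 : ℝ) • u) + N ((2 / 3 : ℝ) • (u₂ + Δt • L u₂)) :=
        map_add_le_add N _ _
    _ = (1/3) * N u + (2/3) * N (u₂ + Δt • L u₂) := by
        rw [map_smul_eq_mul, map_smul_eq_mul]; norm_num
    _ ≤ N u := by nlinarith [hFE u₂]
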